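/- For a substochastic upper bidiagonal matrix T with diagonal entries 2^{i−1}/2^h (i = 1,…,h) and superdiagonal entries 1 − 2^{i−1}/2^h, the matrix I − T is invertible and the first row sum of (I − T)^{−1} equals ∑_{i=1}^{h} 2^i/(2^i − 1). -/

import Mathlib

/-!
Write `d i = 1 - 2^i / 2^h` and let `S` be the superdiagonal shift. Then `1 - T = diag(d) (1 - S)`,
and `1 - S` is inverted by the upper-triangular all-ones matrix `U`, so `(1 - T)⁻¹ = U diag(d)⁻¹`.
The first row of `U` is all ones, hence the row sum is `∑ j, 1 / d j`, and reindexing `j ↦ h - 1 - j`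
turns `1 / d j = 2^h / (2^h - 2^j)` into `2^(i+1) / (2^(i+1) - 1)`.
-/

namespace Matrix

def superShift (n : ℕ) (R : Type*) [Zero R] [One R] : Matrix (Fin n) (Fin n) R :=
  of fun i k => if (k : ℕ) = i + 1 then 1 else 0

def upperOnes (n : ℕ) (R : Type*) [Zero R] [One R] : Matrix (Fin n) (Fin n) R :=
  of fun i j => if i ≤ j then 1 else 0

section Ring

variable {R : Type*} [Ring R] {n : ℕ}

theorem superShift_mul_upperOnes_apply (i j : Fin n) :
    (superShift n R * upperOnes n R) i j = if i < j then 1 else 0 := by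
  simp only [superShift, upperOnes, mul_apply, of_apply, ite_mul, one_mul, zero_mul]
  by_cases hi : (i : ℕ) + 1 < n
  · rw [Finset.sum_eq_single ⟨i + 1, hi⟩ (fun k _ hk => if_neg fun e => hk (Fin.ext e))
      (by simp)]
    exact if_pos rfl
  · rw [Finset.sum_eq_zero fun k _ => if_neg (by omega)]
    exact (if_neg (by omega)).symm

theorem one_sub_superShift_mul_upperOnes : (1 - superShift n R) * upperOnes n R = 1 := by
  ext i j
  rw [sub_mul, one_mul, sub_apply, superShift_mul_upperOnes_apply, one_apply]
  simp only [upperOnes, of_apply]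
  rcases lt_trichotomy i j with h | rfl | h
  · simp [h, h.le, h.ne]
  · simp
  · simp [h.ne', not_le.2 h, not_lt.2 h.le]

end Ring

theorem diagonal_mul_one_sub_superShift_mul_eq_one {K : Type*} [DivisionRing K] {n : ℕ}
    {d : Fin n → K} (hd : ∀ i, d i ≠ 0) :
    diagonal d * (1 - superShift n K) * (upperOnes n K * diagonal d⁻¹) = 1 := by
  rw [mul_assoc, ← mul_assoc (1 - _), one_sub_superShift_mul_upperOnes, one_mul,
    diagonal_mul_diagonal, ← diagonal_one]
  exact congrArg diagonal (funext fun i => mul_inv_cancel₀ (hd i))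

end Matrix

open Finset in
theorem sum_inv_one_sub_two_pow_div (h : ℕ) :
    ∑ j ∈ range h, (1 - (2 : ℝ) ^ j / 2 ^ h)⁻¹
      = ∑ i ∈ range h, (2 : ℝ) ^ (i + 1) / (2 ^ (i + 1) - 1) := by
  rw [← sum_range_reflect (fun i => (2 : ℝ) ^ (i + 1) / (2 ^ (i + 1) - 1))]
  refine sum_congr rfl fun j hj => ?_
  obtain ⟨k, rfl⟩ : ∃ k, h = j + (k + 1) := ⟨h - j - 1, by have := mem_range.1 hj; omega⟩
  rw [show j + (k + 1) - 1 - j = k by omega, pow_add, div_mul_cancel_left₀ (by positivity),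
    ← one_div ((2 : ℝ) ^ (k + 1)), one_sub_div (by positivity), inv_div]

open Matrix in
/-- For the substochastic upper bidiagonal `h×h` matrix `T` with diagonal entries
`2^{i-1}/2^h` and superdiagonal entries `1 - 2^{i-1}/2^h`, the matrix `I - T` is
invertible and the first row sum of `(I - T)⁻¹` equals `∑_{i=1}^h 2^i/(2^i - 1)`. -/
theorem fundamental_matrix_first_row_sum
    (h : ℕ) (hh : 0 < h)
    (T : Matrix (Fin h) (Fin h) ℝ)
    (hT : ∀ i j : Fin h, T i j =
      if j = i then (2 : ℝ) ^ (i : ℕ) / 2 ^ h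
      else if (j : ℕ) = (i : ℕ) + 1 then 1 - (2 : ℝ) ^ (i : ℕ) / 2 ^ h
      else 0) :
    IsUnit (1 - T) ∧
      ∑ j : Fin h, (1 - T)⁻¹ ⟨0, hh⟩ j
        = ∑ i ∈ Finset.range h, (2 : ℝ) ^ (i + 1) / (2 ^ (i + 1) - 1) := by
  set d : Fin h → ℝ := fun i => 1 - 2 ^ (i : ℕ) / 2 ^ h
  have hd : ∀ i, d i ≠ 0 := fun i => by
    have : (2 : ℝ) ^ (i : ℕ) / 2 ^ h < 1 :=
      (div_lt_one (by positivity)).2 (pow_lt_pow_right₀ one_lt_two i.isLt)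
    exact sub_ne_zero.2 this.ne'
  have hfactor : 1 - T = diagonal d * (1 - superShift h ℝ) := by
    ext i k
    rw [Matrix.sub_apply, hT, diagonal_mul, Matrix.sub_apply, one_apply]
    simp only [superShift, of_apply]
    by_cases hki : k = i
    · subst hki
      simp [d]
    · by_cases hk : (k : ℕ) = i + 1 <;> simp [hki, Ne.symm hki, hk, d]
  have hinv := diagonal_mul_one_sub_superShift_mul_eq_one hd
  rw [← hfactor] at hinv
  refine ⟨⟨⟨_, _, hinv, mul_eq_one_comm.1 hinv⟩, rfl⟩, ?_⟩
  rw [inv_eq_right_inv hinv, ← sum_inv_one_sub_two_pow_div, ← Fin.sum_univ_eq_sum_range]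
  refine Finset.sum_congr rfl fun j _ => ?_
  rw [mul_diagonal]
  simp only [upperOnes, of_apply]
  rw [if_pos (show (⟨0, hh⟩ : Fin h) ≤ j from Nat.zero_le _), one_mul]
  rfl
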